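/- arXiv:math/0503427 — 4 statements merged into one kernel-verified Lean document; each statement's English description precedes it below -/
import Mathlib

section
/- Let X be a locally compact Hausdorff space, k : X × X → [0,∞) a continuous, symmetric, nonnegative kernel, and K ⊆ X a nonempty compact set. Let μ ∈ 𝔐₁(K) be a measure of minimal energy, i.e., W(μ) = w(K). Then: (A) U^μ(x) ≥ w(K) for every x ∈ K; (B) U^μ(x) ≤ w(K) for every x in the support of μ; and (C) U^μ(x) = w(K) for μ-almost every x ∈ X. -/
/-! Moving a minimizer `μ` towards a Dirac mass, `(1 - t) μ + t δ_x`, changes its energy by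
`2 t (U^μ(x) - W(μ)) + O(t²)`, so minimality forces `U^μ ≥ W(μ)` on `K`. As `∫ U^μ dμ = W(μ)`,
this is an equality `μ`-a.e.; and since `U^μ` is lower semicontinuous (tube lemma over the
compact `K`), the set where `U^μ > W(μ)` is open and `μ`-null, hence misses the support. -/

open MeasureTheory Set Filter Topology ENNReal

namespace Rendezvous

variable {X : Type*} [MeasurableSpace X]

/-- The potential of a measure `μ` with respect to the kernel `k`. -/
noncomputable def potential (k : X → X → ℝ≥0∞) (μ : Measure X) (x : X) : ℝ≥0∞ :=
  ∫⁻ y, k x y ∂μ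

/-- `𝔐₁(H)`: Borel probability measures giving full mass to `H`. -/
def M1 (H : Set X) : Set (Measure X) :=
  {μ | IsProbabilityMeasure μ ∧ μ H = 1}

/-- `Q(μ,L) = sup_{x ∈ L} U^μ(x)`. -/
noncomputable def Qsup (k : X → X → ℝ≥0∞) (μ : Measure X) (L : Set X) : ℝ≥0∞ :=
  ⨆ x ∈ L, potential k μ x

/-- `Q̲(μ,L) = inf_{x ∈ L} U^μ(x)`. -/
noncomputable def Qinf (k : X → X → ℝ≥0∞) (μ : Measure X) (L : Set X) : ℝ≥0∞ :=
  ⨅ x ∈ L, potential k μ x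

/-- `q(H,L) = inf_{μ ∈ 𝔐₁(H)} Q(μ,L)`. -/
noncomputable def qHL (k : X → X → ℝ≥0∞) (H L : Set X) : ℝ≥0∞ :=
  ⨅ μ ∈ M1 H, Qsup k μ L

/-- `q̲(H,L) = sup_{μ ∈ 𝔐₁(H)} Q̲(μ,L)`. -/
noncomputable def qlowHL (k : X → X → ℝ≥0∞) (H L : Set X) : ℝ≥0∞ :=
  ⨆ μ ∈ M1 H, Qinf k μ L

/-- The `n`-th Chebyshev constant `M_n(H,L)`. -/
noncomputable def chebyshev (k : X → X → ℝ≥0∞) (n : ℕ) (H L : Set X) : ℝ≥0∞ :=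
  ⨆ (w : Fin n → X) (_ : ∀ i, w i ∈ H), ⨅ x ∈ L, (∑ j, k x (w j)) / (n : ℝ≥0∞)

/-- The `n`-th dual Chebyshev constant `M̄_n(H,L)`. -/
noncomputable def dualChebyshev (k : X → X → ℝ≥0∞) (n : ℕ) (H L : Set X) : ℝ≥0∞ :=
  ⨅ (w : Fin n → X) (_ : ∀ i, w i ∈ H), ⨆ x ∈ L, (∑ j, k x (w j)) / (n : ℝ≥0∞)

/-- `M(H,L) = sup_{n ≥ 1} M_n(H,L)`. -/
noncomputable def chebyshevConst (k : X → X → ℝ≥0∞) (H L : Set X) : ℝ≥0∞ :=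
  ⨆ n ≥ 1, chebyshev k n H L

/-- `M̄(H,L) = inf_{n ≥ 1} M̄_n(H,L)`. -/
noncomputable def dualChebyshevConst (k : X → X → ℝ≥0∞) (H L : Set X) : ℝ≥0∞ :=
  ⨅ n ≥ 1, dualChebyshev k n H L

/-- The energy `W(μ)` of a measure. -/
noncomputable def energy (k : X → X → ℝ≥0∞) (μ : Measure X) : ℝ≥0∞ :=
  ∫⁻ x, ∫⁻ y, k x y ∂μ ∂μ

/-- The Wiener energy `w(H)` of a set: the infimum of energies of probability
measures with compact support contained in `H`. -/
noncomputable def wienerEnergy [TopologicalSpace X] (k : X → X → ℝ≥0∞) (H : Set X) : ℝ≥0∞ :=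
  ⨅ μ ∈ {μ : Measure X | IsProbabilityMeasure μ ∧ ∃ C, IsCompact C ∧ C ⊆ H ∧ μ C = 1},
    energy k μ

/-- The support of a measure: points all of whose open neighbourhoods have
positive measure. -/
def msupport [TopologicalSpace X] (μ : Measure X) : Set X :=
  {x | ∀ U : Set X, IsOpen U → x ∈ U → 0 < μ U}

open scoped NNReal

theorem _root_.Real.le_of_forall_le_quadratic_bezier {a u c : ℝ}
    (h : ∀ t ∈ Ioc (0 : ℝ) 1, a ≤ (1 - t) * ((1 - t) * a + t * u) + t * ((1 - t) * u + t * c)) :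
    a ≤ u := by
  have hdiff : ∀ᶠ t in 𝓝[>] (0 : ℝ), 2 * (a - u) ≤ t * (a - 2 * u + c) := by
    filter_upwards [Ioc_mem_nhdsGT (zero_lt_one' ℝ)] with t ht
    have : 0 ≤ t * (2 * (u - a) + t * (a - 2 * u + c)) := by nlinarith [h t ht]
    linarith [(mul_nonneg_iff_of_pos_left ht.1).1 this]
  have hlim : Tendsto (fun t : ℝ => t * (a - 2 * u + c)) (𝓝[>] 0) (𝓝 0) :=
    ((continuous_mul_const _).tendsto' 0 0 (zero_mul _)).mono_left nhdsWithin_le_nhds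
  linarith [ge_of_tendsto hlim hdiff]

theorem _root_.ENNReal.le_of_forall_le_quadratic_bezier {a u c : ℝ≥0∞} (ha : a ≠ ∞) (hc : c ≠ ∞)
    (h : ∀ t : ℝ≥0, t ≤ 1 →
      a ≤ ((1 - t : ℝ≥0) : ℝ≥0∞) * (((1 - t : ℝ≥0) : ℝ≥0∞) * a + t * u) +
        t * (((1 - t : ℝ≥0) : ℝ≥0∞) * u + t * c)) :
    a ≤ u := by
  rcases eq_or_ne u ∞ with rfl | hu
  · exact le_top
  lift a to ℝ≥0 using ha
  lift u to ℝ≥0 using hu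
  lift c to ℝ≥0 using hc
  refine ENNReal.coe_le_coe.2 <|
    NNReal.coe_le_coe.1 (Real.le_of_forall_le_quadratic_bezier (c := c) ?_)
  intro t ⟨ht0, ht1⟩
  set t' : ℝ≥0 := ⟨t, ht0.le⟩
  have ht' : t' ≤ 1 := ht1
  have : a ≤ (1 - t') * ((1 - t') * a + t' * u) + t' * ((1 - t') * u + t' * c) := by
    exact_mod_cast h t' ht'
  have hreal := NNReal.coe_le_coe.2 this
  push_cast [NNReal.coe_sub ht'] at hreal
  exact hreal

theorem lowerSemicontinuous_potential [TopologicalSpace X] {k : X → X → ℝ≥0∞}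
    (hk_cont : Continuous fun p : X × X => k p.1 p.2) (hk_fin : ∀ x y, k x y ≠ ∞)
    {K : Set X} (hK : IsCompact K) {μ : Measure X} [IsFiniteMeasure μ]
    (hμK : ∀ᵐ y ∂μ, y ∈ K) :
    LowerSemicontinuous (potential k μ) := by
  intro x₁ c hc
  obtain ⟨r, hr0, hcr⟩ := ENNReal.lt_iff_exists_add_pos_lt.1 hc
  obtain ⟨δ, hδ0, hδr⟩ := ENNReal.exists_pos_mul_lt (measure_ne_top μ univ)
    (ENNReal.coe_ne_zero.2 hr0.ne')
  have hopen : IsOpen {p : X × X | k x₁ p.2 < k p.1 p.2 + δ} :=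
    isOpen_lt (hk_cont.comp (continuous_const.prodMk continuous_snd))
      (hk_cont.add continuous_const)
  have htube : ∀ᶠ x in 𝓝 x₁, ∀ y ∈ K, k x₁ y < k x y + δ :=
    hK.eventually_forall_of_forall_eventually fun y _ =>
      hopen.mem_nhds (ENNReal.lt_add_right (hk_fin x₁ y) hδ0.ne')
  filter_upwards [htube] with x hx
  have hclose : potential k μ x₁ ≤ potential k μ x + δ * μ univ :=
    calc potential k μ x₁ ≤ ∫⁻ y, k x y + δ ∂μ :=
          lintegral_mono_ae (hμK.mono fun y hy => (hx y hy).le)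
      _ = potential k μ x + δ * μ univ := by
          rw [lintegral_add_right' _ aemeasurable_const, lintegral_const]; rfl
  refine (ENNReal.add_lt_add_iff_right ENNReal.coe_ne_top).1 (hcr.trans_le ?_)
  exact hclose.trans (add_le_add_right hδr.le _)

theorem _root_.LowerSemicontinuous.le_of_mem_msupport [TopologicalSpace X]
    {β : Type*} [LinearOrder β] {f : X → β} (hf : LowerSemicontinuous f) {μ : Measure X} {c : β}
    (hfc : ∀ᵐ x ∂μ, f x ≤ c) {x : X} (hx : x ∈ msupport μ) :
    f x ≤ c := by
  by_contra! hcx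
  have hnull : μ {x | c < f x} = 0 := by
    simpa only [ae_iff, not_le] using hfc
  exact (hx _ (hf.isOpen_preimage c) hcx).ne' hnull

theorem dirac_mem_M1 [MeasurableSingletonClass X] {H : Set X} {x : X} (hx : x ∈ H) :
    Measure.dirac x ∈ M1 H :=
  ⟨inferInstance, Measure.dirac_apply_of_mem hx⟩

theorem smul_add_smul_mem_M1 {H : Set X} {μ ν : Measure X} (hμ : μ ∈ M1 H) (hν : ν ∈ M1 H)
    {t : ℝ≥0} (ht : t ≤ 1) :
    ((1 - t : ℝ≥0) : ℝ≥0∞) • μ + (t : ℝ≥0∞) • ν ∈ M1 H := by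
  have hμ1 := hμ.1
  have hν1 := hν.1
  have hsum : 1 - (t : ℝ≥0∞) + t = 1 := tsub_add_cancel_of_le (ENNReal.coe_le_one_iff.2 ht)
  exact ⟨⟨by simp [hsum]⟩, by simp [hμ.2, hν.2, hsum]⟩

theorem wienerEnergy_le_energy [TopologicalSpace X] (k : X → X → ℝ≥0∞) {K : Set X}
    (hK : IsCompact K) {ν : Measure X} (hν : ν ∈ M1 K) :
    wienerEnergy k K ≤ energy k ν :=
  iInf₂_le ν ⟨hν.1, K, hK, subset_rfl, hν.2⟩

theorem energy_dirac [MeasurableSingletonClass X] (k : X → X → ℝ≥0∞) (x : X) :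
    energy k (Measure.dirac x) = k x x := by
  simp [energy]

theorem energy_smul_add_smul_dirac [MeasurableSingletonClass X] {k : X → X → ℝ≥0∞}
    (hk_sym : ∀ x y, k x y = k y x) {x₀ : X} (hk : Measurable (k x₀)) (μ : Measure X)
    {s : ℝ≥0∞} (hs : s ≠ ∞) (t : ℝ≥0∞) :
    energy k (s • μ + t • Measure.dirac x₀) =
      s * (s * energy k μ + t * potential k μ x₀) + t * (s * potential k μ x₀ + t * k x₀ x₀) := by
  have hpot : ∀ x, potential k (s • μ + t • Measure.dirac x₀) x =
      s * potential k μ x + t * k x₀ x := by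
    intro x
    simp [potential, lintegral_add_measure, hk_sym x x₀]
  calc energy k (s • μ + t • Measure.dirac x₀)
      = ∫⁻ x, s * potential k μ x + t * k x₀ x ∂(s • μ + t • Measure.dirac x₀) :=
        lintegral_congr hpot
    _ = _ := by
        rw [lintegral_add_measure, lintegral_smul_measure, lintegral_smul_measure, lintegral_dirac,
          lintegral_add_right' _ (hk.const_mul t).aemeasurable, lintegral_const_mul' _ _ hs,
          lintegral_const_mul _ hk]
        rfl

theorem energy_le_potential_of_forall_energy_le [MeasurableSingletonClass X]
    {k : X → X → ℝ≥0∞} (hk_sym : ∀ x y, k x y = k y x) {x₀ : X} (hk : Measurable (k x₀))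
    (hkx₀ : k x₀ x₀ ≠ ∞) {μ : Measure X} (hμ : energy k μ ≠ ∞)
    (hmin : ∀ t : ℝ≥0, t ≤ 1 →
      energy k μ ≤ energy k (((1 - t : ℝ≥0) : ℝ≥0∞) • μ + (t : ℝ≥0∞) • Measure.dirac x₀)) :
    energy k μ ≤ potential k μ x₀ :=
  ENNReal.le_of_forall_le_quadratic_bezier hμ hkx₀ fun t ht =>
    (hmin t ht).trans_eq (energy_smul_add_smul_dirac hk_sym hk μ ENNReal.coe_ne_top t)

theorem potential_ae_eq_energy {k : X → X → ℝ≥0∞} {μ : Measure X} [IsProbabilityMeasure μ]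
    (hU : AEMeasurable (potential k μ) μ) (hμ : energy k μ ≠ ∞)
    (hle : ∀ᵐ x ∂μ, energy k μ ≤ potential k μ x) :
    ∀ᵐ x ∂μ, potential k μ x = energy k μ :=
  (ae_eq_of_ae_le_of_lintegral_le hle (by simpa using hμ) hU (by simp [energy, potential])).mono
    fun _ h => h.symm

theorem frostman_general {X : Type*}
    [TopologicalSpace X] [T2Space X]
    [MeasurableSpace X] [BorelSpace X]
    (k : X → X → ℝ≥0∞)
    (hk_cont : Continuous fun p : X × X => k p.1 p.2)
    (hk_sym : ∀ x y, k x y = k y x)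
    (hk_fin : ∀ x y, k x y ≠ ∞)
    (K : Set X) (hK : IsCompact K)
    (μ : Measure X) (hμ : μ ∈ M1 K)
    (hmin : energy k μ = wienerEnergy k K) :
    (∀ x ∈ K, wienerEnergy k K ≤ potential k μ x) ∧
    (∀ x ∈ msupport μ, potential k μ x ≤ wienerEnergy k K) ∧
    (∀ᵐ x ∂μ, potential k μ x = wienerEnergy k K) := by
  have := hμ.1
  have hk : ∀ x, Measurable (k x) := fun x => (hk_cont.comp (Continuous.prodMk_right x)).measurable
  have hKμ : ∀ᵐ y ∂μ, y ∈ K := (mem_ae_iff_prob_eq_one hK.isClosed.measurableSet).2 hμ.2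
  obtain ⟨x₀, hx₀⟩ : K.Nonempty := nonempty_of_measure_ne_zero (μ := μ) (by simp [hμ.2])
  have hfin : energy k μ ≠ ∞ := by
    rw [hmin]
    exact ne_top_of_le_ne_top (hk_fin x₀ x₀)
      ((wienerEnergy_le_energy k hK (dirac_mem_M1 hx₀)).trans_eq (energy_dirac k x₀))
  have hA : ∀ x ∈ K, wienerEnergy k K ≤ potential k μ x := fun x hx =>
    hmin ▸ energy_le_potential_of_forall_energy_le hk_sym (hk x) (hk_fin x x) hfin fun t ht =>
      hmin ▸ wienerEnergy_le_energy k hK (smul_add_smul_mem_M1 hμ (dirac_mem_M1 hx) ht)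
  have hU : LowerSemicontinuous (potential k μ) :=
    lowerSemicontinuous_potential hk_cont hk_fin hK hKμ
  have hC : ∀ᵐ x ∂μ, potential k μ x = wienerEnergy k K :=
    hmin ▸ potential_ae_eq_energy hU.measurable.aemeasurable hfin
      (hKμ.mono fun x hx => hmin ▸ hA x hx)
  exact ⟨hA, fun x hx => hU.le_of_mem_msupport (hC.mono fun _ h => h.le) hx, hC⟩

/-- Frostman's theorem (Fuglede's version) for a continuous, symmetric,
nonnegative, finite-valued kernel on a locally compact Hausdorff space and a nonempty
compact set `K`: any energy-minimizing `μ ∈ 𝔐₁(K)` satisfies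
(A) `U^μ ≥ w(K)` everywhere on `K`; (B) `U^μ ≤ w(K)` on `supp μ`;
(C) `U^μ = w(K)` μ-almost everywhere. -/
theorem frostman {X : Type*}
    [TopologicalSpace X] [T2Space X] [LocallyCompactSpace X]
    [MeasurableSpace X] [BorelSpace X]
    (k : X → X → ℝ≥0∞)
    (hk_cont : Continuous fun p : X × X => k p.1 p.2)
    (hk_sym : ∀ x y, k x y = k y x)
    (hk_fin : ∀ x y, k x y ≠ ∞)
    (K : Set X) (hK : IsCompact K) (hKne : K.Nonempty)
    (μ : Measure X) (hμ : μ ∈ M1 K)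
    (hmin : energy k μ = wienerEnergy k K) :
    (∀ x ∈ K, wienerEnergy k K ≤ potential k μ x) ∧
    (∀ x ∈ msupport μ, potential k μ x ≤ wienerEnergy k K) ∧
    (∀ᵐ x ∂μ, potential k μ x = wienerEnergy k K) :=
  frostman_general k hk_cont hk_sym hk_fin K hK μ hμ hmin

end Rendezvous
end

section
/- Let X be a locally compact Hausdorff space, k a kernel on X, H ⊆ X arbitrary and K ⊆ X a nonempty compact set. Then there exists μ ∈ 𝔐₁(K) attaining the infimum defining q(K,H): namely, sup_{x∈H} U^μ(x) ≤ q(K,H) (hence sup_{x∈H} U^μ(x) = q(K,H)). -/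
open MeasureTheory Set Filter Topology ENNReal

namespace Rendezvous

variable {X : Type*} [MeasurableSpace X]

/-!
Take a minimizing sequence `ν n ∈ 𝔐₁(K)` and pass to its limit along an ultrafilter finer than
`atTop`. Since `X` need not be metrizable, weak-* compactness is replaced by a direct
construction: the limits of the masses `ν n C` of compact sets `C` form a content, and its measure
`μ` still gives mass one to the compact set `K`, while on open sets `μ` is at most the limit of the
masses. For `x ∈ H` the kernel `k x` is lower semicontinuous, so its superlevel sets
`{(j + 1) δ < k x}` are open; the staircase of their indicators approximates `k x` within `δ`,
which gives `U^μ(x) ≤ lim U^{ν n}(x) + δ ≤ q(K,H) + δ`.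
-/

open TopologicalSpace

section Staircase

variable (δ c : ℝ≥0∞)

lemma le_add_tsum_staircase (hδ : δ ≠ 0) :
    c ≤ δ + ∑' j : ℕ, if ((j : ℝ≥0∞) + 1) * δ < c then δ else 0 := by
  by_cases h : ∀ j : ℕ, ((j : ℝ≥0∞) + 1) * δ < c
  · simp [h, ENNReal.tsum_const_eq_top_of_ne_zero hδ]
  simp only [not_forall, not_lt] at h
  have hm_lt : ∀ j < Nat.find h, ((j : ℝ≥0∞) + 1) * δ < c := fun j hj =>
    not_le.mp (Nat.find_min h hj)
  calc c ≤ ((Nat.find h : ℝ≥0∞) + 1) * δ := Nat.find_spec h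
    _ = δ + ∑ j ∈ Finset.range (Nat.find h),
          if ((j : ℝ≥0∞) + 1) * δ < c then δ else 0 := by
        rw [Finset.sum_congr rfl fun j hj => if_pos (hm_lt j (Finset.mem_range.mp hj))]
        simp only [Finset.sum_const, Finset.card_range, nsmul_eq_mul]
        ring
    _ ≤ _ := by gcongr; exact ENNReal.sum_le_tsum _

lemma sum_staircase_le (s : Finset ℕ) :
    ∑ j ∈ s, (if ((j : ℝ≥0∞) + 1) * δ < c then δ else 0) ≤ c := by
  set t := s.filter fun j : ℕ => ((j : ℝ≥0∞) + 1) * δ < c with ht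
  rw [← Finset.sum_filter, ← ht, Finset.sum_const, nsmul_eq_mul]
  rcases t.eq_empty_or_nonempty with ht_empty | ht_ne
  · simp [ht_empty]
  have hcard : t.card ≤ t.max' ht_ne + 1 := by
    simpa using Finset.card_le_card
      (show t ⊆ Finset.range (t.max' ht_ne + 1) from fun j hj =>
        Finset.mem_range_succ_iff.mpr (t.le_max' j hj))
  calc (t.card : ℝ≥0∞) * δ ≤ ((t.max' ht_ne : ℝ≥0∞) + 1) * δ := by
        gcongr; exact_mod_cast hcard
    _ ≤ c := (Finset.mem_filter.mp (t.max'_mem ht_ne)).2.le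

end Staircase

section LayerCake

variable (ν : Measure X) {g : X → ℝ≥0∞} (δ : ℝ≥0∞)

lemma sum_mul_measure_lt_le_lintegral (hg : Measurable g) (s : Finset ℕ) :
    ∑ j ∈ s, δ * ν {y | ((j : ℝ≥0∞) + 1) * δ < g y} ≤ ∫⁻ y, g y ∂ν := by
  have hmeas : ∀ j : ℕ, MeasurableSet {y | ((j : ℝ≥0∞) + 1) * δ < g y} := fun _ =>
    measurableSet_lt measurable_const hg
  simp_rw [← lintegral_indicator_const (hmeas _)]
  rw [← lintegral_finsetSum _ fun j _ => measurable_const.indicator (hmeas j)]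
  refine lintegral_mono fun y => ?_
  simpa only [indicator_apply, mem_ofPred_eq] using sum_staircase_le δ (g y) s

lemma lintegral_le_add_tsum_mul_measure_lt (hg : Measurable g) (hδ : δ ≠ 0) :
    ∫⁻ y, g y ∂ν ≤ δ * ν univ + ∑' j : ℕ, δ * ν {y | ((j : ℝ≥0∞) + 1) * δ < g y} := by
  have hmeas : ∀ j : ℕ, MeasurableSet {y | ((j : ℝ≥0∞) + 1) * δ < g y} := fun _ =>
    measurableSet_lt measurable_const hg
  simp_rw [← lintegral_indicator_const (hmeas _), ← lintegral_const,
    ← lintegral_tsum fun j => (measurable_const.indicator (hmeas j)).aemeasurable,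
    ← lintegral_add_left measurable_const]
  refine lintegral_mono fun y => ?_
  simpa only [indicator_apply, mem_ofPred_eq] using le_add_tsum_staircase δ (g y) hδ

end LayerCake

section UltrafilterLimit

variable {ι : Type*} (φ : Ultrafilter ι) (μ : ι → Measure X)

noncomputable def limMass (s : Set X) : ℝ≥0∞ :=
  (φ.map fun i => μ i s).lim

lemma tendsto_limMass (s : Set X) : Tendsto (fun i => μ i s) φ (𝓝 (limMass φ μ s)) :=
  Ultrafilter.le_nhds_lim _

lemma limMass_mono {s t : Set X} (h : s ⊆ t) : limMass φ μ s ≤ limMass φ μ t :=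
  le_of_tendsto_of_tendsto' (tendsto_limMass φ μ s) (tendsto_limMass φ μ t) fun _ =>
    measure_mono h

lemma limMass_union {s t : Set X} (hst : Disjoint s t) (ht : MeasurableSet t) :
    limMass φ μ (s ∪ t) = limMass φ μ s + limMass φ μ t :=
  tendsto_nhds_unique (tendsto_limMass φ μ _)
    (((tendsto_limMass φ μ s).add (tendsto_limMass φ μ t)).congr fun _ =>
      (measure_union hst ht).symm)

lemma limMass_union_le (s t : Set X) :
    limMass φ μ (s ∪ t) ≤ limMass φ μ s + limMass φ μ t :=
  le_of_tendsto_of_tendsto' (tendsto_limMass φ μ _)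
    ((tendsto_limMass φ μ s).add (tendsto_limMass φ μ t)) fun _ => measure_union_le s t

variable [∀ i, IsProbabilityMeasure (μ i)]

lemma limMass_le_one (s : Set X) : limMass φ μ s ≤ 1 :=
  le_of_tendsto' (tendsto_limMass φ μ s) fun _ => prob_le_one

lemma limMass_ne_top (s : Set X) : limMass φ μ s ≠ ∞ :=
  ((limMass_le_one φ μ s).trans_lt one_lt_top).ne

variable [TopologicalSpace X]

noncomputable def limContent [OpensMeasurableSpace X] : Content X where
  toFun C := (limMass φ μ C).toNNReal
  mono' _ _ h := toNNReal_mono (limMass_ne_top φ μ _) (limMass_mono φ μ h)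
  sup_disjoint' C₁ C₂ h _ h₂ := by
    rw [Compacts.coe_sup, limMass_union φ μ h h₂.measurableSet,
      toNNReal_add (limMass_ne_top φ μ _) (limMass_ne_top φ μ _)]
  sup_le' C₁ C₂ := by
    rw [Compacts.coe_sup, ← toNNReal_add (limMass_ne_top φ μ _) (limMass_ne_top φ μ _)]
    exact toNNReal_mono (add_ne_top.mpr ⟨limMass_ne_top φ μ _, limMass_ne_top φ μ _⟩)
      (limMass_union_le φ μ _ _)

lemma limContent_apply [OpensMeasurableSpace X] (C : Compacts X) :
    limContent φ μ C = limMass φ μ C :=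
  coe_toNNReal (limMass_ne_top φ μ _)

variable [R1Space X] [BorelSpace X]

noncomputable def limMeasure : Measure X :=
  (limContent φ μ).measure

lemma limMeasure_le_limMass_of_isOpen {U : Set X} (hU : IsOpen U) :
    limMeasure φ μ U ≤ limMass φ μ U := by
  rw [limMeasure, Content.measure_apply _ hU.measurableSet,
    Content.outerMeasure_of_isOpen _ _ hU]
  exact iSup₂_le fun C hC => (limContent_apply φ μ C).trans_le (limMass_mono φ μ hC)

lemma limMass_le_limMeasure_of_isCompact {K : Set X} (hK : IsCompact K) :
    limMass φ μ K ≤ limMeasure φ μ K := by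
  calc limMass φ μ K = limContent φ μ ⟨K, hK⟩ := (limContent_apply φ μ ⟨K, hK⟩).symm
    _ ≤ (limContent φ μ).outerMeasure K := Content.le_outerMeasure_compacts _ ⟨K, hK⟩
    _ ≤ limMeasure φ μ K := le_toMeasure_apply _ (Content.borel_le_caratheodory _) _

lemma limMeasure_univ_le_one : limMeasure φ μ univ ≤ 1 :=
  (limMeasure_le_limMass_of_isOpen φ μ isOpen_univ).trans (limMass_le_one φ μ univ)

lemma limMeasure_mem_M1 {K : Set X} (hK : IsCompact K) (hμK : ∀ i, μ i K = 1) :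
    limMeasure φ μ ∈ M1 K := by
  have hlim : limMass φ μ K = 1 :=
    tendsto_nhds_unique (tendsto_limMass φ μ K) (by simp only [hμK, tendsto_const_nhds])
  have hK_le : 1 ≤ limMeasure φ μ K := hlim ▸ limMass_le_limMeasure_of_isCompact φ μ hK
  have huniv : limMeasure φ μ univ = 1 :=
    (limMeasure_univ_le_one φ μ).antisymm (hK_le.trans (measure_mono (subset_univ K)))
  exact ⟨⟨huniv⟩, le_antisymm ((measure_mono (subset_univ K)).trans huniv.le) hK_le⟩

lemma lintegral_limMeasure_le {g : X → ℝ≥0∞} (hg : LowerSemicontinuous g) {c : ℝ≥0∞}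
    (h : ∀ᶠ i in φ, ∫⁻ y, g y ∂μ i ≤ c) : ∫⁻ y, g y ∂limMeasure φ μ ≤ c := by
  refine ENNReal.le_of_forall_pos_le_add fun δ hδ _ => ?_
  set V : ℕ → Set X := fun j => {y | ((j : ℝ≥0∞) + 1) * δ < g y}
  have hsum : ∑' j, (δ : ℝ≥0∞) * limMeasure φ μ (V j) ≤ c := by
    rw [ENNReal.tsum_eq_iSup_sum]
    refine iSup_le fun s => ?_
    have hlim : Tendsto (fun i => ∑ j ∈ s, (δ : ℝ≥0∞) * μ i (V j)) φ
        (𝓝 (∑ j ∈ s, (δ : ℝ≥0∞) * limMass φ μ (V j))) :=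
      tendsto_finsetSum s fun j _ =>
        ENNReal.Tendsto.const_mul (tendsto_limMass φ μ (V j)) (Or.inr coe_ne_top)
    calc ∑ j ∈ s, (δ : ℝ≥0∞) * limMeasure φ μ (V j)
        ≤ ∑ j ∈ s, (δ : ℝ≥0∞) * limMass φ μ (V j) := by
          gcongr with j
          exact limMeasure_le_limMass_of_isOpen φ μ (hg.isOpen_preimage _)
      _ ≤ c := le_of_tendsto hlim <| h.mono fun i hi =>
          (sum_mul_measure_lt_le_lintegral (μ i) δ hg.measurable s).trans hi
  calc ∫⁻ y, g y ∂limMeasure φ μ ≤ δ * limMeasure φ μ univ + ∑' j, δ * limMeasure φ μ (V j) :=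
        lintegral_le_add_tsum_mul_measure_lt _ _ hg.measurable (coe_ne_zero.mpr hδ.ne')
    _ ≤ δ * 1 + c := by gcongr; exact limMeasure_univ_le_one φ μ
    _ = c + δ := by rw [mul_one, add_comm]

lemma Qsup_limMeasure_le {k : X → X → ℝ≥0∞} (hk : ∀ x, LowerSemicontinuous (k x))
    {L : Set X} {c : ℝ≥0∞} (h : ∀ᶠ i in φ, Qsup k (μ i) L ≤ c) :
    Qsup k (limMeasure φ μ) L ≤ c :=
  iSup₂_le fun x hx => lintegral_limMeasure_le φ μ (hk x) <| h.mono fun i hi =>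
    (le_iSup₂ (f := fun x _ => potential k (μ i) x) x hx).trans hi

end UltrafilterLimit

lemma exists_seq_mem_M1_tendsto_qHL (k : X → X → ℝ≥0∞) {H : Set X} (L : Set X)
    (hH : (M1 H).Nonempty) :
    ∃ ν : ℕ → Measure X, (∀ n, ν n ∈ M1 H) ∧
      Tendsto (fun n => Qsup k (ν n) L) atTop (𝓝 (qHL k H L)) := by
  obtain ⟨u, -, hu, hu_mem⟩ :=
    exists_seq_tendsto_sInf (hH.image fun ν => Qsup k ν L) (OrderBot.bddBelow _)
  choose ν hν hνu using hu_mem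
  refine ⟨ν, hν, ?_⟩
  rw [qHL, ← sInf_image]
  simpa only [hνu] using hu

theorem exists_min_measure_general {X : Type*}
    [TopologicalSpace X] [T2Space X]
    [MeasurableSpace X] [BorelSpace X]
    (k : X → X → ℝ≥0∞)
    (hk_lsc : LowerSemicontinuous fun p : X × X => k p.1 p.2)
    (H : Set X) (K : Set X) (hK : IsCompact K) (hKne : K.Nonempty) :
    ∃ μ : Measure X, μ ∈ M1 K ∧ Qsup k μ H ≤ qHL k K H ∧ Qsup k μ H = qHL k K H := by
  obtain ⟨x₀, hx₀⟩ := hKne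
  have hM1 : (M1 K).Nonempty :=
    ⟨Measure.dirac x₀, inferInstance, Measure.dirac_apply_of_mem hx₀⟩
  obtain ⟨ν, hνK, hνq⟩ := exists_seq_mem_M1_tendsto_qHL k H hM1
  have hν_prob : ∀ n, IsProbabilityMeasure (ν n) := fun n => (hνK n).1
  set φ : Ultrafilter ℕ := Ultrafilter.of atTop
  have hμK := limMeasure_mem_M1 φ ν hK fun n => (hνK n).2
  have hμq : Qsup k (limMeasure φ ν) H ≤ qHL k K H :=
    le_of_forall_gt_imp_ge_of_dense fun c hc => Qsup_limMeasure_le φ ν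
      (fun x => hk_lsc.comp (Continuous.prodMk_right x))
      (((hνq.eventually (gt_mem_nhds hc)).filter_mono (Ultrafilter.of_le _)).mono
        fun _ => le_of_lt)
  exact ⟨limMeasure φ ν, hμK, hμq, hμq.antisymm (iInf₂_le _ hμK)⟩

/-- For `H ⊆ X` arbitrary and `K ⊆ X` nonempty compact, the infimum
defining `q(K,H)` is attained: there is `μ ∈ 𝔐₁(K)` with
`sup_{x∈H} U^μ(x) ≤ q(K,H)` (hence `= q(K,H)`). -/
theorem exists_min_measure {X : Type*}
    [TopologicalSpace X] [T2Space X] [LocallyCompactSpace X]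
    [MeasurableSpace X] [BorelSpace X]
    (k : X → X → ℝ≥0∞) (hk_sym : ∀ x y, k x y = k y x)
    (hk_lsc : LowerSemicontinuous fun p : X × X => k p.1 p.2)
    (H : Set X) (K : Set X) (hK : IsCompact K) (hKne : K.Nonempty) :
    ∃ μ : Measure X, μ ∈ M1 K ∧ Qsup k μ H ≤ qHL k K H ∧ Qsup k μ H = qHL k K H :=
  exists_min_measure_general k hk_lsc H K hK hKne

end Rendezvous
end

section
/- Let X be a locally compact Hausdorff space, k : X × X → [0,∞) a continuous, symmetric, nonnegative kernel, H ⊆ X arbitrary and K ⊆ X a nonempty compact set, and assume k is bounded on K × H (i.e., there is a constant C with k(x,y) ≤ C for all x ∈ K, y ∈ H). Then there exists ν ∈ 𝔐₁(K) attaining the supremum defining q̲(K,H): namely, U^ν(y) ≥ q̲(K,H) for every y ∈ H. -/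
open MeasureTheory Set Filter Topology ENNReal

/-! The measures in `𝔐₁(K)` form a weakly compact set of finite measures, `K` being compact.
On it the potential at `y ∈ H` is the integral of the bounded continuous function
`min (k y ·) C`, hence weakly continuous, so `μ ↦ Q̲(μ, H)` is upper semicontinuous there and
attains its supremum `q̲(K, H)`. -/

open NNReal BoundedContinuousFunction

namespace MeasureTheory.FiniteMeasure

variable {X : Type*} [MeasurableSpace X] [TopologicalSpace X]

theorem continuous_lintegral_min [OpensMeasurableSpace X] {f : X → ℝ≥0∞}
    (hf : Continuous f) (C : ℝ≥0) :
    Continuous fun μ : FiniteMeasure X => ∫⁻ x, min (f x) C ∂(μ : Measure X) := by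
  have hfin : ∀ x, min (f x) C ≠ ∞ := fun x => ((min_le_right _ _).trans_lt coe_lt_top).ne
  have hcont : Continuous fun x => (min (f x) C).toNNReal :=
    continuousOn_toNNReal.comp_continuous (hf.min continuous_const) hfin
  have hbound : ∀ x, ((min (f x) C).toNNReal : ℝ) ≤ C := fun x => by
    exact_mod_cast toNNReal_mono coe_ne_top (min_le_right _ _)
  let g : X →ᵇ ℝ≥0 := .mkOfBound ⟨_, hcont⟩ C fun x y => by
    rw [NNReal.dist_eq, ContinuousMap.coe_mk, abs_sub_le_iff]
    constructor <;> linarith [hbound x, hbound y, (min (f x) C).toNNReal.coe_nonneg,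
      (min (f y) C).toNNReal.coe_nonneg]
  have hg : ∀ x, (g x : ℝ≥0∞) = min (f x) C := fun x => coe_toNNReal (hfin x)
  have htest : (fun μ : FiniteMeasure X => ∫⁻ x, min (f x) C ∂(μ : Measure X)) =
      fun μ => (μ.testAgainstNN g : ℝ≥0∞) := by
    funext μ
    simp only [testAgainstNN_coe_eq, hg]
  rw [htest]
  exact ENNReal.continuous_coe.comp (continuous_testAgainstNN_eval g)

theorem isCompact_setOf_mass_eq_null_compl [T2Space X] [BorelSpace X]
    (c : ℝ≥0) {K : Set X} (hK : IsCompact K) :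
    IsCompact {μ : FiniteMeasure X | μ.mass = c ∧ μ Kᶜ = 0} := by
  have hsplit : {μ : FiniteMeasure X | μ.mass = c ∧ μ Kᶜ = 0} =
      {μ | μ.mass ≤ c ∧ μ Kᶜ = 0} ∩ {μ | μ.mass = c} := by
    ext μ
    exact ⟨fun h => ⟨⟨h.1.le, h.2⟩, h.1⟩, fun h => ⟨h.2, h.1.2⟩⟩
  rw [hsplit]
  exact (isCompact_setOfPred_finiteMeasure_le_of_isCompact c hK).inter_right
    (isClosed_eq continuous_mass continuous_const)

end MeasureTheory.FiniteMeasure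

namespace Rendezvous

variable {X : Type*} [MeasurableSpace X]

theorem finiteMeasure_mem_M1_iff {K : Set X} (hK : MeasurableSet K) (μ : FiniteMeasure X) :
    (μ : Measure X) ∈ M1 K ↔ μ.mass = 1 ∧ μ Kᶜ = 0 := by
  have hprob : IsProbabilityMeasure (μ : Measure X) ↔ μ.mass = 1 := by
    rw [isProbabilityMeasure_iff, ← FiniteMeasure.ennreal_mass, ENNReal.coe_eq_one]
  change IsProbabilityMeasure (μ : Measure X) ∧ (μ : Measure X) K = 1 ↔ _
  rw [hprob, FiniteMeasure.null_iff_toMeasure_null]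
  refine and_congr_right fun h => ?_
  have := hprob.2 h
  exact (prob_compl_eq_zero_iff hK).symm

theorem potential_eq_lintegral_min {k : X → X → ℝ≥0∞} {μ : Measure X} {K : Set X}
    (hμ : μ Kᶜ = 0) {y : X} {C : ℝ≥0∞} (hC : ∀ x ∈ K, k y x ≤ C) :
    potential k μ y = ∫⁻ x, min (k y x) C ∂μ := by
  refine lintegral_congr_ae ?_
  filter_upwards [measure_eq_zero_iff_ae_notMem.1 hμ] with x hx
  rw [min_eq_left (hC x (not_not.1 hx))]

theorem exists_max_measure_general {X : Type*}
    [TopologicalSpace X] [T2Space X]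
    [MeasurableSpace X] [BorelSpace X]
    (k : X → X → ℝ≥0∞)
    (hk_cont : Continuous fun p : X × X => k p.1 p.2)
    (hk_sym : ∀ x y, k x y = k y x)
    (H : Set X) (K : Set X) (hK : IsCompact K) (hKne : K.Nonempty)
    (C : ℝ≥0∞) (hC : C ≠ ∞) (hbdd : ∀ x ∈ K, ∀ y ∈ H, k x y ≤ C) :
    ∃ ν : Measure X, ν ∈ M1 K ∧ ∀ y ∈ H, qlowHL k K H ≤ potential k ν y := by
  lift C to ℝ≥0 using hC
  set T := {μ : FiniteMeasure X | μ.mass = 1 ∧ μ Kᶜ = 0}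
  have hT (μ : FiniteMeasure X) : (μ : Measure X) ∈ M1 K ↔ μ ∈ T :=
    finiteMeasure_mem_M1_iff hK.isClosed.measurableSet μ
  have hTne : T.Nonempty := by
    obtain ⟨x₀, hx₀⟩ := hKne
    exact ⟨⟨Measure.dirac x₀, inferInstance⟩,
      (hT _).1 ⟨Measure.dirac.isProbabilityMeasure, Measure.dirac_apply_of_mem hx₀⟩⟩
  let Φ (μ : FiniteMeasure X) : ℝ≥0∞ :=
    ⨅ y ∈ H, ∫⁻ x, min (k y x) C ∂(μ : Measure X)
  have hΦ : UpperSemicontinuous Φ := upperSemicontinuous_biInf fun y _ =>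
    (FiniteMeasure.continuous_lintegral_min (hk_cont.comp (.prodMk_right y)) C)
      |>.upperSemicontinuous
  obtain ⟨ν, hνT, hνmax⟩ := (hΦ.upperSemicontinuousOn T).exists_isMaxOn hTne
    (FiniteMeasure.isCompact_setOf_mass_eq_null_compl 1 hK)
  have hpot : ∀ μ ∈ T, ∀ y ∈ H,
      potential k (μ : Measure X) y = ∫⁻ x, min (k y x) C ∂(μ : Measure X) :=
    fun μ hμ y hy =>
      potential_eq_lintegral_min ((FiniteMeasure.null_iff_toMeasure_null _ _).1 hμ.2)
        fun x hx => hk_sym x y ▸ hbdd x hx y hy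
  refine ⟨ν, (hT ν).2 hνT, fun y hy => ?_⟩
  calc qlowHL k K H ≤ Φ ν := iSup₂_le fun μ hμ => by
        have := hμ.1
        let μ' : FiniteMeasure X := ⟨μ, inferInstance⟩
        have hμ' : μ' ∈ T := (hT μ').1 hμ
        calc Qinf k μ H = Φ μ' := iInf_congr fun y => iInf_congr fun hy => hpot μ' hμ' y hy
          _ ≤ Φ ν := hνmax hμ'
    _ ≤ ∫⁻ x, min (k y x) C ∂(ν : Measure X) := iInf₂_le y hy
    _ = potential k ν y := (hpot ν hνT y hy).symm

/-- For a continuous, symmetric, nonnegative (finite-valued) kernel which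
is bounded on `K × H`, with `K` nonempty compact, the supremum defining `q̲(K,H)` is
attained: there is `ν ∈ 𝔐₁(K)` with `U^ν(y) ≥ q̲(K,H)` for every `y ∈ H`. -/
theorem exists_max_measure {X : Type*}
    [TopologicalSpace X] [T2Space X] [LocallyCompactSpace X]
    [MeasurableSpace X] [BorelSpace X]
    (k : X → X → ℝ≥0∞)
    (hk_cont : Continuous fun p : X × X => k p.1 p.2)
    (hk_sym : ∀ x y, k x y = k y x)
    (hk_fin : ∀ x y, k x y ≠ ∞)
    (H : Set X) (K : Set X) (hK : IsCompact K) (hKne : K.Nonempty)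
    (C : ℝ≥0∞) (hC : C ≠ ∞) (hbdd : ∀ x ∈ K, ∀ y ∈ H, k x y ≤ C) :
    ∃ ν : Measure X, ν ∈ M1 K ∧ ∀ y ∈ H, qlowHL k K H ≤ potential k ν y :=
  exists_max_measure_general k hk_cont hk_sym H K hK hKne C hC hbdd

end Rendezvous
end

section
/- Let X be a Hausdorff topological space (not necessarily locally compact), k a symmetric, lower semicontinuous function k : X × X → [0,∞], and H, L ⊆ X. Assume the average set A(H,L) = ⋂_{μ∈𝔐₁(H)} [Q̲(μ,L), Q(μ,L)] is nonempty. Let ε_n → 0 be a sequence of positive reals, and for each n let μ_n ∈ 𝔐₁(H) be ε_n-quasi-invariant on L, i.e., Q(μ_n,L) − Q̲(μ_n,L) ≤ ε_n, and let ρ_n be a value attained by the potential U^{μ_n} at some point of L. Then A(H,L) consists of a single point a(H,L), and ρ_n → a(H,L) as n → ∞. -/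
/-!
Every point of `A(H,L)` and every value `U^{μ_n}(x_n)` lies in `[Q̲(μ_n,L), Q(μ_n,L)]`, an
interval of width at most `ε_n → 0`: two points of `A(H,L)` are therefore equal, and the values
are squeezed towards the remaining one.
-/

open MeasureTheory Set Filter Topology ENNReal

namespace ENNReal

variable {ε : ℕ → ℝ≥0∞}

theorem le_of_forall_le_add_of_tendsto_zero {r s : ℝ≥0∞} (h : ∀ n, r ≤ s + ε n)
    (hε : Tendsto ε atTop (𝓝 0)) : r ≤ s :=
  ge_of_tendsto' (by simpa using hε.const_add s) h

theorem tendsto_of_forall_mem_Icc {lo hi c : ℕ → ℝ≥0∞} {a : ℝ≥0∞}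
    (ha : ∀ n, a ∈ Icc (lo n) (hi n)) (hc : ∀ n, c n ∈ Icc (lo n) (hi n))
    (hwidth : ∀ n, hi n ≤ lo n + ε n) (hε : Tendsto ε atTop (𝓝 0)) :
    Tendsto c atTop (𝓝 a) := by
  have hlower : Tendsto (fun n => a - ε n) atTop (𝓝 a) := by
    simpa using ENNReal.Tendsto.sub tendsto_const_nhds hε (Or.inr zero_ne_top)
  have hupper : Tendsto (fun n => a + ε n) atTop (𝓝 a) := by
    simpa using hε.const_add a
  refine tendsto_of_tendsto_of_tendsto_of_le_of_le hlower hupper (fun n => ?_) (fun n => ?_)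
  · rw [tsub_le_iff_right]
    calc a ≤ hi n := (ha n).2
      _ ≤ lo n + ε n := hwidth n
      _ ≤ c n + ε n := by gcongr; exact (hc n).1
  · calc c n ≤ hi n := (hc n).2
      _ ≤ lo n + ε n := hwidth n
      _ ≤ a + ε n := by gcongr; exact (ha n).1

end ENNReal

namespace Rendezvous

variable {X : Type*} [MeasurableSpace X] {k : X → X → ℝ≥0∞} {H L : Set X}

/-- The average set `A(H,L)`. -/
def averageSet (k : X → X → ℝ≥0∞) (H L : Set X) : Set ℝ≥0∞ :=
  {r | ∀ μ ∈ M1 H, Qinf k μ L ≤ r ∧ r ≤ Qsup k μ L}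

theorem potential_mem_Icc {μ : Measure X} {x : X} (hx : x ∈ L) :
    potential k μ x ∈ Icc (Qinf k μ L) (Qsup k μ L) :=
  ⟨iInf₂_le x hx, le_iSup₂ (f := fun y (_ : y ∈ L) => potential k μ y) x hx⟩

theorem averageSet_subsingleton {ε : ℕ → ℝ≥0∞} (hε : Tendsto ε atTop (𝓝 0))
    {μ : ℕ → Measure X} (hμ : ∀ n, μ n ∈ M1 H)
    (hquasi : ∀ n, Qsup k (μ n) L ≤ Qinf k (μ n) L + ε n) :
    (averageSet k H L).Subsingleton := by
  have hle : ∀ r ∈ averageSet k H L, ∀ s ∈ averageSet k H L, r ≤ s := fun r hr s hs =>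
    ENNReal.le_of_forall_le_add_of_tendsto_zero (fun n =>
      calc r ≤ Qsup k (μ n) L := (hr _ (hμ n)).2
        _ ≤ Qinf k (μ n) L + ε n := hquasi n
        _ ≤ s + ε n := by gcongr; exact (hs _ (hμ n)).1) hε
  exact fun r hr s hs => le_antisymm (hle r hr s hs) (hle s hs r hr)

theorem quasi_invariant_limit_general {X : Type*}
    [MeasurableSpace X]
    (k : X → X → ℝ≥0∞)
    (H L : Set X)
    (hA : ∃ a : ℝ≥0∞, ∀ μ ∈ M1 H, Qinf k μ L ≤ a ∧ a ≤ Qsup k μ L)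
    (ε : ℕ → ℝ≥0∞) (hε : Tendsto ε atTop (𝓝 0))
    (μ : ℕ → Measure X) (hμ : ∀ n, μ n ∈ M1 H)
    (hquasi : ∀ n, Qsup k (μ n) L ≤ Qinf k (μ n) L + ε n)
    (x : ℕ → X) (hx : ∀ n, x n ∈ L) :
    ∃ a : ℝ≥0∞,
      {r : ℝ≥0∞ | ∀ μ' ∈ M1 H, Qinf k μ' L ≤ r ∧ r ≤ Qsup k μ' L} = {a} ∧
      Tendsto (fun n => potential k (μ n) (x n)) atTop (𝓝 a) := by
  obtain ⟨a, ha⟩ := hA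
  refine ⟨a, (averageSet_subsingleton hε hμ hquasi).eq_singleton_of_mem
    (s := averageSet k H L) ha, ?_⟩
  exact ENNReal.tendsto_of_forall_mem_Icc (fun n => ha _ (hμ n))
    (fun n => potential_mem_Icc (hx n)) hquasi hε

/-- In a Hausdorff space (not necessarily locally compact), if the
average set `A(H,L)` is nonempty and there are `ε_n`-quasi-invariant measures
`μ_n ∈ 𝔐₁(H)` on `L` with `ε_n → 0`, then `A(H,L)` is a singleton `{a}` and any values
`ρ_n = U^{μ_n}(x_n)` attained on `L` converge to `a`. -/
theorem quasi_invariant_limit {X : Type*}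
    [TopologicalSpace X] [T2Space X] [MeasurableSpace X] [BorelSpace X]
    (k : X → X → ℝ≥0∞) (hk_sym : ∀ x y, k x y = k y x)
    (hk_lsc : LowerSemicontinuous fun p : X × X => k p.1 p.2)
    (H L : Set X)
    (hA : ∃ a : ℝ≥0∞, ∀ μ ∈ M1 H, Qinf k μ L ≤ a ∧ a ≤ Qsup k μ L)
    (ε : ℕ → ℝ≥0∞) (hε_pos : ∀ n, 0 < ε n) (hε : Tendsto ε atTop (𝓝 0))
    (μ : ℕ → Measure X) (hμ : ∀ n, μ n ∈ M1 H)
    (hquasi : ∀ n, Qsup k (μ n) L ≤ Qinf k (μ n) L + ε n)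
    (x : ℕ → X) (hx : ∀ n, x n ∈ L) :
    ∃ a : ℝ≥0∞,
      {r : ℝ≥0∞ | ∀ μ' ∈ M1 H, Qinf k μ' L ≤ r ∧ r ≤ Qsup k μ' L} = {a} ∧
      Tendsto (fun n => potential k (μ n) (x n)) atTop (𝓝 a) :=
  quasi_invariant_limit_general k H L hA ε hε μ hμ hquasi x hx

end Rendezvous
end
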